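/- arXiv:1604.00550 — 3 statements merged into one kernel-verified Lean document; each statement's English description precedes it below -/
import Mathlib

section
/- For every integer n ≥ 4, the graph obtained from H_{n−1} by adding a new vertex w′ adjacent to v and to every vertex b_1,…,b_{n−2} has tree-depth at most n. (This graph is the result of contracting in H_n an edge incident with a degree-2 vertex a_i.) -/
/-- A `k`-ranking of a graph `G`: a labeling of the vertices with labels from `{1,…,k}` such
that every path joining two distinct vertices with the same label has an internal vertex with
a strictly larger label. -/
def IsRanking {V : Type*} (G : SimpleGraph V) (k : ℕ) (f : V → ℕ) : Prop :=
  (∀ v, 1 ≤ f v ∧ f v ≤ k) ∧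
  ∀ ⦃u w : V⦄ (p : G.Walk u w), p.IsPath → u ≠ w → f u = f w →
    ∃ x ∈ p.support, x ≠ u ∧ x ≠ w ∧ f u < f x

/-- The tree-depth of `G`: the least `k` for which `G` admits a `k`-ranking. -/
noncomputable def treedepth {V : Type*} (G : SimpleGraph V) : ℕ :=
  sInf {k | ∃ f, IsRanking G k f}

/-- The graph `H_n`, obtained from `K_n` by subdividing once every edge incident to a fixed
vertex `v`.  Here `none` is `v`, `some (Sum.inl i)` is the degree-2 subdivision vertex
`a_{i+1}`, and `some (Sum.inr i)` is the vertex `b_{i+1}` of the clique on `B_n`. -/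
def Hgraph (n : ℕ) : SimpleGraph (Option (Fin (n - 1) ⊕ Fin (n - 1))) :=
  SimpleGraph.fromRel (fun x y =>
    (∃ i : Fin (n - 1), x = none ∧ y = some (Sum.inl i)) ∨
    (∃ i : Fin (n - 1), x = some (Sum.inl i) ∧ y = some (Sum.inr i)) ∨
    (∃ i j : Fin (n - 1), x = some (Sum.inr i) ∧ y = some (Sum.inr j)))

/-- `H_{n-1}` together with a new vertex `w'` (here `none`) adjacent to `v` (here `some none`)
and to every clique vertex `b_j` (here `some (some (Sum.inr j))`).  This is the result of
contracting in `H_n` an edge incident with a degree-2 vertex `a_i`. -/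
def HplusW (n : ℕ) : SimpleGraph (Option (Option (Fin (n - 1 - 1) ⊕ Fin (n - 1 - 1)))) :=
  SimpleGraph.fromRel (fun x y =>
    (∃ u w, x = some u ∧ y = some w ∧ (Hgraph (n - 1)).Adj u w) ∨
    (x = none ∧ y = some none) ∨
    (∃ i : Fin (n - 1 - 1), x = none ∧ y = some (some (Sum.inr i))))


def rk (n : ℕ) : Option (Option (Fin (n - 1 - 1) ⊕ Fin (n - 1 - 1))) → ℕ
  | none => 1
  | some none => n
  | some (some (Sum.inl _)) => 1
  | some (some (Sum.inr i)) => (i : ℕ) + 2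

lemma neighbor_big (n : ℕ) (hn : 4 ≤ n) (u x : Option (Option (Fin (n - 1 - 1) ⊕ Fin (n - 1 - 1))))
    (h : (HplusW n).Adj u x) (hu : rk n u = 1) : 2 ≤ rk n x := by
  have hadj := h
  rw [HplusW, SimpleGraph.fromRel_adj] at hadj
  obtain ⟨hne, hcase⟩ := hadj
  rcases hcase with (⟨a, b, ha, hb, hab⟩ | ⟨h1, h2⟩ | ⟨i, h1, h2⟩) |
                   (⟨a, b, ha, hb, hab⟩ | ⟨h1, h2⟩ | ⟨i, h1, h2⟩)
  · subst ha hb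
    rw [Hgraph, SimpleGraph.fromRel_adj] at hab
    obtain ⟨_, hc⟩ := hab
    rcases hc with (⟨i, rfl, rfl⟩ | ⟨i, rfl, rfl⟩ | ⟨i, j, rfl, rfl⟩) |
                   (⟨i, rfl, rfl⟩ | ⟨i, rfl, rfl⟩ | ⟨i, j, rfl, rfl⟩) <;>
      simp only [rk] at hu ⊢ <;> omega
  · subst h1 h2; simp only [rk]; omega
  · subst h1 h2; simp only [rk]; omega
  · subst ha hb
    rw [Hgraph, SimpleGraph.fromRel_adj] at hab
    obtain ⟨_, hc⟩ := hab
    rcases hc with (⟨i, rfl, rfl⟩ | ⟨i, rfl, rfl⟩ | ⟨i, j, rfl, rfl⟩) |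
                   (⟨i, rfl, rfl⟩ | ⟨i, rfl, rfl⟩ | ⟨i, j, rfl, rfl⟩) <;>
      simp only [rk] at hu ⊢ <;> omega
  · subst h1 h2; simp only [rk] at hu ⊢; omega
  · subst h1 h2; simp only [rk] at hu ⊢; omega

lemma rk_eq_one (n : ℕ) (hn : 4 ≤ n) (u w : Option (Option (Fin (n - 1 - 1) ⊕ Fin (n - 1 - 1))))
    (hne : u ≠ w) (hf : rk n u = rk n w) : rk n u = 1 := by
  rcases u with _ | (_ | (i | i)) <;> rcases w with _ | (_ | (j | j)) <;>
    simp only [rk] at hf ⊢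
  all_goals first
    | rfl
    | omega
    | (exact absurd rfl hne)
    | (have := i.isLt; have := j.isLt; omega)
    | (have := i.isLt; omega)
    | (have := j.isLt; omega)
    | (exact absurd (congrArg (fun k => some (some (Sum.inr k))) (Fin.ext (by omega))) hne)

/-- For `n ≥ 4`, the graph obtained from `H_{n-1}` by adding a new vertex `w'` adjacent to `v`
and to all of `b_1, …, b_{n-2}` has tree-depth at most `n`. -/
theorem treedepth_HplusW_le (n : ℕ) (hn : 4 ≤ n) : treedepth (HplusW n) ≤ n := by
  apply Nat.sInf_le
  refine ⟨rk n, ?_, ?_⟩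
  · intro v
    rcases v with _ | (_ | (i | i)) <;> simp only [rk] <;>
      first | omega | (have := i.isLt; omega)
  · intro u w p hp hne hf
    have hu1 : rk n u = 1 := rk_eq_one n hn u w hne hf
    cases p with
    | nil => exact absurd rfl hne
    | @cons _ x _ h q =>
      have hx2 : 2 ≤ rk n x := neighbor_big n hn u x h hu1
      refine ⟨x, ?_, ?_, ?_, ?_⟩
      · simp [SimpleGraph.Walk.support_cons]
      · exact fun e => (HplusW n).ne_of_adj h e.symm
      · intro e; rw [← e, hu1] at hf; omega
      · omega
end

section
/- For every integer n ≥ 4, the star-clique transform of H_n at the vertex v is isomorphic to K_{n−1} □ K_2. -/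
/-- The star-clique transform of `G` at `v`: delete `v`, and join two remaining vertices iff
they were adjacent in `G` or both were neighbors of `v`. -/
def starClique {V : Type*} (G : SimpleGraph V) (v : V) : SimpleGraph {x : V // x ≠ v} :=
  SimpleGraph.fromRel (fun x y => G.Adj x y ∨ (G.Adj v x ∧ G.Adj v y))

/-- The Cartesian (box) product `K_a □ K_2`. -/
def KaK2 (a : ℕ) : SimpleGraph (Fin a × Fin 2) :=
  SimpleGraph.boxProd ⊤ ⊤

/-! Deleting `v` makes the `a_i` pairwise adjacent (they are exactly the neighbours of `v`), keeps
the `b_i` a clique, and leaves `a_i b_j` an edge iff `i = j`: this is `K_{n-1} □ K_2`, with the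
`a_i` and the `b_i` as the two copies of `K_{n-1}`. -/

open SimpleGraph Sum

theorem starClique_adj {V : Type*} {G : SimpleGraph V} {v : V} {x y : {x : V // x ≠ v}} :
    (starClique G v).Adj x y ↔ x ≠ y ∧ (G.Adj x y ∨ G.Adj v x ∧ G.Adj v y) := by
  simp only [starClique, fromRel_adj, G.adj_comm y x, and_comm (a := G.Adj v y), or_self, ne_eq]

namespace Hgraph

variable {n : ℕ} {i j : Fin (n - 1)}

@[simp] theorem adj_none_some {s : Fin (n - 1) ⊕ Fin (n - 1)} :
    (Hgraph n).Adj none (some s) ↔ s.isLeft := by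
  cases s <;> simp [Hgraph]

@[simp] theorem not_adj_inl_inl : ¬ (Hgraph n).Adj (some (inl i)) (some (inl j)) := by
  simp [Hgraph]

@[simp] theorem adj_inl_inr : (Hgraph n).Adj (some (inl i)) (some (inr j)) ↔ i = j := by
  simp [Hgraph, eq_comm]

@[simp] theorem adj_inr_inl : (Hgraph n).Adj (some (inr i)) (some (inl j)) ↔ i = j := by
  rw [adj_comm, adj_inl_inr, eq_comm]

@[simp] theorem adj_inr_inr : (Hgraph n).Adj (some (inr i)) (some (inr j)) ↔ i ≠ j := by
  simp [Hgraph]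

end Hgraph

def prodFinTwoEquivSumNeNone (α : Type*) : α × Fin 2 ≃ {x : Option (α ⊕ α) // x ≠ none} :=
  (Equiv.prodComm _ _).trans <| (finTwoEquiv.prodCongr (.refl α)).trans <|
    (Equiv.boolProdEquivSum α).trans <| (Equiv.optionIsSomeEquiv _).symm.trans <|
      Equiv.subtypeEquivRight fun _ => Option.isSome_iff_ne_none

@[simp] theorem prodFinTwoEquivSumNeNone_zero {α : Type*} (i : α) :
    (prodFinTwoEquivSumNeNone α (i, 0) : Option (α ⊕ α)) = some (inl i) := rfl

@[simp] theorem prodFinTwoEquivSumNeNone_one {α : Type*} (i : α) :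
    (prodFinTwoEquivSumNeNone α (i, 1) : Option (α ⊕ α)) = some (inr i) := rfl

def kaK2IsoStarCliqueHgraph (n : ℕ) : KaK2 (n - 1) ≃g starClique (Hgraph n) none where
  toEquiv := prodFinTwoEquivSumNeNone _
  map_rel_iff' := by
    rintro ⟨i, k⟩ ⟨j, l⟩
    fin_cases k <;> fin_cases l <;> simp [starClique_adj, KaK2, boxProd_adj, eq_comm]

theorem starClique_Hgraph_iso_general (n : ℕ) :
    Nonempty (SimpleGraph.Iso (starClique (Hgraph n) none) (KaK2 (n - 1))) :=
  ⟨(kaK2IsoStarCliqueHgraph n).symm⟩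

/-- For `n ≥ 4`, the star-clique transform of `H_n` at `v` is isomorphic to `K_{n-1} □ K_2`. -/
theorem starClique_Hgraph_iso (n : ℕ) (hn : 4 ≤ n) :
    Nonempty (SimpleGraph.Iso (starClique (Hgraph n) none) (KaK2 (n - 1))) :=
  starClique_Hgraph_iso_general n
end

section
/- For every integer n ≥ 4, the vertex v of H_n is not 1-unique: in every (n+1)-ranking f of H_n with f(v) = 1, there exists a vertex u ≠ v with f(u) = 1. -/
lemma Hgraph_adj_va {n : ℕ} (i : Fin (n - 1)) :
    (Hgraph n).Adj none (some (Sum.inl i)) := by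
  rw [Hgraph, SimpleGraph.fromRel_adj]
  exact ⟨by simp, Or.inl (Or.inl ⟨i, rfl, rfl⟩)⟩

lemma Hgraph_adj_ab {n : ℕ} (i : Fin (n - 1)) :
    (Hgraph n).Adj (some (Sum.inl i)) (some (Sum.inr i)) := by
  rw [Hgraph, SimpleGraph.fromRel_adj]
  exact ⟨by simp, Or.inl (Or.inr (Or.inl ⟨i, rfl, rfl⟩))⟩

lemma Hgraph_adj_bb {n : ℕ} {i j : Fin (n - 1)} (hij : i ≠ j) :
    (Hgraph n).Adj (some (Sum.inr i)) (some (Sum.inr j)) := by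
  rw [Hgraph, SimpleGraph.fromRel_adj]
  exact ⟨by simp [hij], Or.inl (Or.inr (Or.inr ⟨i, j, rfl, rfl⟩))⟩

lemma ranking_adj_ne {V : Type*} {G : SimpleGraph V} {k : ℕ} {f : V → ℕ}
    (hf : IsRanking G k f) {u w : V} (h : G.Adj u w) : f u ≠ f w := by
  intro he
  obtain ⟨x, hx, hxu, hxw, -⟩ := hf.2 (SimpleGraph.Walk.cons h SimpleGraph.Walk.nil)
    (by simp [SimpleGraph.Walk.isPath_def, h.ne]) h.ne he
  simp [SimpleGraph.Walk.support] at hx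
  tauto

lemma ranking_path2 {V : Type*} {G : SimpleGraph V} {k : ℕ} {f : V → ℕ}
    (hf : IsRanking G k f) {u x w : V} (h1 : G.Adj u x) (h2 : G.Adj x w)
    (huw : u ≠ w) (he : f u = f w) : f u < f x := by
  obtain ⟨y, hy, hyu, hyw, hlt⟩ := hf.2
    (SimpleGraph.Walk.cons h1 (SimpleGraph.Walk.cons h2 SimpleGraph.Walk.nil))
    (by simp [SimpleGraph.Walk.isPath_def, h1.ne, h2.ne, huw]) huw he
  simp [SimpleGraph.Walk.support] at hy
  rcases hy with rfl | rfl | rfl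
  · exact absurd rfl hyu
  · exact hlt
  · exact absurd rfl hyw

lemma ranking_path3 {V : Type*} {G : SimpleGraph V} {k : ℕ} {f : V → ℕ}
    (hf : IsRanking G k f) {u x y w : V} (h1 : G.Adj u x) (h2 : G.Adj x y) (h3 : G.Adj y w)
    (huy : u ≠ y) (huw : u ≠ w) (hxw : x ≠ w) (he : f u = f w) :
    f u < f x ∨ f u < f y := by
  obtain ⟨z, hz, hzu, hzw, hlt⟩ := hf.2
    (SimpleGraph.Walk.cons h1 (SimpleGraph.Walk.cons h2 (SimpleGraph.Walk.cons h3 SimpleGraph.Walk.nil)))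
    (by simp [SimpleGraph.Walk.isPath_def, h1.ne, h2.ne, h3.ne, huy, huw, hxw]) huw he
  simp [SimpleGraph.Walk.support] at hz
  rcases hz with rfl | rfl | rfl | rfl
  · exact absurd rfl hzu
  · exact Or.inl hlt
  · exact Or.inr hlt
  · exact absurd rfl hzw

lemma combo (m : ℕ) (hm : 3 ≤ m) (α β : Fin m → ℕ)
    (hα : Function.Injective α) (hβ : Function.Injective β)
    (hαr : ∀ i, α i ∈ Finset.Icc 2 (m + 2))
    (hβr : ∀ i, β i ∈ Finset.Icc 2 (m + 2))
    (hne : ∀ i, α i ≠ β i)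
    (hC : ∀ i j, i ≠ j → α i = β j → α i < β i ∧ α i < α j) : False := by
  classical
  set A := Finset.image α Finset.univ with hA
  set B := Finset.image β Finset.univ with hB
  have hAcard : A.card = m := by
    rw [hA, Finset.card_image_of_injective _ hα, Finset.card_univ, Fintype.card_fin]
  have hBcard : B.card = m := by
    rw [hB, Finset.card_image_of_injective _ hβ, Finset.card_univ, Fintype.card_fin]
  have hAsub : A ⊆ Finset.Icc 2 (m + 2) := by
    intro x hx
    obtain ⟨i, -, rfl⟩ := Finset.mem_image.mp hx
    exact hαr i
  have hBsub : B ⊆ Finset.Icc 2 (m + 2) := by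
    intro x hx
    obtain ⟨i, -, rfl⟩ := Finset.mem_image.mp hx
    exact hβr i
  have hUsub : A ∪ B ⊆ Finset.Icc 2 (m + 2) := Finset.union_subset hAsub hBsub
  have hUcard : (A ∪ B).card ≤ m + 1 := by
    have := Finset.card_le_card hUsub
    simpa [Nat.card_Icc] using this
  have hsum := Finset.card_union_add_card_inter A B
  set S := A ∩ B with hS
  have hScard : 2 ≤ S.card := by omega
  have hSne : S.Nonempty := Finset.card_pos.mp (by omega)
  set t := S.max' hSne with ht
  have htS : t ∈ S := S.max'_mem hSne
  obtain ⟨htA, htB⟩ := Finset.mem_inter.mp htS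
  obtain ⟨i, -, hi⟩ := Finset.mem_image.mp htA
  obtain ⟨j, -, hj⟩ := Finset.mem_image.mp htB
  have hij : i ≠ j := by
    rintro rfl; exact hne i (hi.trans hj.symm)
  obtain ⟨hbi, haj⟩ := hC i j hij (hi.trans hj.symm)
  have hbiA : β i ∉ A := by
    intro hmem
    have : β i ∈ S := Finset.mem_inter.mpr ⟨hmem, Finset.mem_image_of_mem β (Finset.mem_univ i)⟩
    have := S.le_max' _ this
    omega
  have hEne : (S.erase t).Nonempty := by
    rw [← Finset.card_pos, Finset.card_erase_of_mem htS]; omega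
  set t' := (S.erase t).max' hEne with ht'
  have ht'mem : t' ∈ S.erase t := (S.erase t).max'_mem hEne
  have ht'ne : t' ≠ t := (Finset.mem_erase.mp ht'mem).1
  have ht'S : t' ∈ S := (Finset.mem_erase.mp ht'mem).2
  have ht'lt : t' < t := lt_of_le_of_ne (S.le_max' _ ht'S) ht'ne
  obtain ⟨ht'A, ht'B⟩ := Finset.mem_inter.mp ht'S
  obtain ⟨k, -, hk⟩ := Finset.mem_image.mp ht'A
  obtain ⟨l, -, hl⟩ := Finset.mem_image.mp ht'B
  have hkl : k ≠ l := by
    rintro rfl; exact hne k (hk.trans hl.symm)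
  obtain ⟨hbk, hal⟩ := hC k l hkl (hk.trans hl.symm)
  have hbkA : β k ∉ A := by
    intro hmem
    have hβkS : β k ∈ S := Finset.mem_inter.mpr ⟨hmem, Finset.mem_image_of_mem β (Finset.mem_univ k)⟩
    have hβkle : β k ≤ t := S.le_max' _ hβkS
    have hβkt : β k ≠ t := by
      intro h
      have : k = j := hβ (h.trans hj.symm)
      subst this
      omega
    have : β k ∈ S.erase t := Finset.mem_erase.mpr ⟨hβkt, hβkS⟩
    have := (S.erase t).le_max' _ this
    omega
  have hik : i ≠ k := by
    rintro rfl; omega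
  have hbik : β i ≠ β k := fun h => hik (hβ h)
  have hpair : ({β i, β k} : Finset ℕ) ⊆ Finset.Icc 2 (m + 2) \ A := by
    intro x hx
    rcases Finset.mem_insert.mp hx with rfl | hx
    · exact Finset.mem_sdiff.mpr ⟨hβr i, hbiA⟩
    · rw [Finset.mem_singleton] at hx; subst hx
      exact Finset.mem_sdiff.mpr ⟨hβr k, hbkA⟩
  have h2 : ({β i, β k} : Finset ℕ).card = 2 := Finset.card_pair hbik
  have hsd : (Finset.Icc 2 (m + 2) \ A).card = 1 := by
    rw [Finset.card_sdiff_of_subset hAsub, hAcard, Nat.card_Icc]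
    omega
  have := Finset.card_le_card hpair
  omega

/-- For `n ≥ 4`, the vertex `v` of `H_n` is not 1-unique: every optimal (i.e. `(n+1)`-)ranking
of `H_n` giving `v` the label `1` also gives the label `1` to some other vertex. -/
theorem Hgraph_v_not_oneUnique (n : ℕ) (hn : 4 ≤ n)
    (f : Option (Fin (n - 1) ⊕ Fin (n - 1)) → ℕ)
    (hf : IsRanking (Hgraph n) (n + 1) f) (hv : f none = 1) :
    ∃ u, u ≠ none ∧ f u = 1 := by
  by_contra hcon
  push_neg at hcon
  have hm : 3 ≤ n - 1 := by omega
  have hkn : n + 1 = (n - 1) + 2 := by omega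
  set α : Fin (n - 1) → ℕ := fun i => f (some (Sum.inl i)) with hαdef
  set β : Fin (n - 1) → ℕ := fun i => f (some (Sum.inr i)) with hβdef
  have hbound : ∀ u : Option (Fin (n - 1) ⊕ Fin (n - 1)), u ≠ none →
      2 ≤ f u ∧ f u ≤ (n - 1) + 2 := by
    intro u hu
    have h1 := (hf.1 u).1
    have h2 := (hf.1 u).2
    have h3 := hcon u hu
    omega
  -- injectivity of β : b-labels distinct (clique)
  have hβinj : Function.Injective β := by
    intro i j hijf
    by_contra hij
    exact ranking_adj_ne hf (Hgraph_adj_bb hij) hijf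
  -- injectivity of α : path a_i - v - a_j
  have hαinj : Function.Injective α := by
    intro i j hijf
    by_contra hij
    have huw : (some (Sum.inl i) : Option (Fin (n - 1) ⊕ Fin (n - 1))) ≠ some (Sum.inl j) := by
      simp [hij]
    have hlt := ranking_path2 hf (Hgraph_adj_va i).symm (Hgraph_adj_va j) huw hijf
    have := hbound (some (Sum.inl i)) (by simp)
    omega
  -- C1 : α i ≠ β i
  have hne : ∀ i, α i ≠ β i := fun i => ranking_adj_ne hf (Hgraph_adj_ab i)
  -- C2 and C3
  have hC : ∀ i j, i ≠ j → α i = β j → α i < β i ∧ α i < α j := by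
    intro i j hij hEq
    constructor
    · -- path a_i - b_i - b_j
      exact ranking_path2 hf (Hgraph_adj_ab i) (Hgraph_adj_bb hij) (by simp) hEq
    · -- path a_i - v - a_j - b_j
      have h3 := ranking_path3 hf (Hgraph_adj_va i).symm (Hgraph_adj_va j) (Hgraph_adj_ab j)
        (by simp [hij]) (by simp) (by simp) hEq
      have hb := hbound (some (Sum.inl i)) (by simp)
      rcases h3 with h | h
      · omega
      · exact h
  exact combo (n - 1) hm α β hαinj hβinj
    (fun i => Finset.mem_Icc.mpr (hbound _ (by simp)))
    (fun i => Finset.mem_Icc.mpr (hbound _ (by simp)))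
    hne hC
end
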